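/- arXiv:1403.5378 — 2 statements merged into one kernel-verified Lean document; each statement's English description precedes it below -/
import Mathlib

section
/- If P and Q are integrally closed lattice simplices with 0 in the interior of P and P reflexive, then the free sum simplex P *_i Q is integrally closed. -/
/-- `x` is an integer (lattice) point. -/
def isInt {n : ℕ} (x : Fin n → ℝ) : Prop := ∀ j, ∃ z : ℤ, x j = (z : ℝ)

/-- `P` is a lattice polytope: the convex hull of finitely many lattice points. -/
def isLatticePolytope {n : ℕ} (P : Set (Fin n → ℝ)) : Prop :=
  ∃ V : Finset (Fin n → ℝ), (∀ v ∈ V, isInt v) ∧ P = convexHull ℝ (V : Set (Fin n → ℝ))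

/-- The polar dual `P^Δ = {y : x·y ≤ 1 for all x ∈ P}`. -/
def polarDual {n : ℕ} (P : Set (Fin n → ℝ)) : Set (Fin n → ℝ) :=
  {y : Fin n → ℝ | ∀ x ∈ P, ∑ j, x j * y j ≤ 1}

/-- A reflexive polytope (with the origin in its interior). -/
def isReflexive0 {n : ℕ} (P : Set (Fin n → ℝ)) : Prop :=
  isLatticePolytope P ∧ (0 : Fin n → ℝ) ∈ interior P ∧ isLatticePolytope (polarDual P)

/-- A reflexive polytope in the wider sense: a lattice translate of a reflexive
polytope containing the origin in its interior. -/
def isReflexive {n : ℕ} (P : Set (Fin n → ℝ)) : Prop :=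
  ∃ t : Fin n → ℝ, isInt t ∧ isReflexive0 ((fun x => x - t) '' P)


open Pointwise in
/-- `P` is integrally closed: every lattice point of the dilate `mP` is a sum of `m`
lattice points of `P`. -/
def isIntegrallyClosed {n : ℕ} (P : Set (Fin n → ℝ)) : Prop :=
  ∀ m : ℕ, 0 < m → ∀ x ∈ (m : ℝ) • P, isInt x →
    ∃ f : Fin m → Fin n → ℝ, (∀ k, f k ∈ P ∧ isInt (f k)) ∧ x = ∑ k, f k

/-!
A lattice point `x` of `N • (P *ᵢ Q)` has the form `(s • p, t • (q - w i))` with `s + t = N`,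
`p ∈ P`, `q ∈ Q`. Since `P` is reflexive, the vertices `u` of its polar dual are lattice points,
so `x ⬝ᵥ u` is an integer at most `s`, hence at most `⌊s⌋`; thus `s • p ∈ ⌊s⌋ • P`. The
remaining `b = N - ⌊s⌋ ≥ t` summands absorb the second block, because
`t • (q - w i) + b • w i ∈ b • Q`. Integral closedness of `P` and `Q` splits the two blocks into
`⌊s⌋` and `b` lattice points, which embed as lattice points of `P *ᵢ Q`.
-/

open Set
open scoped Pointwise

namespace Fin

variable {n m : ℕ} {α : Type*}

lemma append_add_append [Add α] (u u' : Fin n → α) (v v' : Fin m → α) :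
    append u v + append u' v' = append (u + u') (v + v') := by
  ext i
  refine addCases (fun j => ?_) (fun j => ?_) i <;> simp

lemma smul_append {R : Type*} [SMul R α] (c : R) (u : Fin n → α) (v : Fin m → α) :
    c • append u v = append (c • u) (c • v) := by
  ext i
  refine addCases (fun j => ?_) (fun j => ?_) i <;> simp

end Fin

section Lattice

variable {n m : ℕ}

lemma isInt_zero : isInt (0 : Fin n → ℝ) := fun _ => ⟨0, by simp⟩

lemma isInt.add {x y : Fin n → ℝ} (hx : isInt x) (hy : isInt y) : isInt (x + y) := by
  intro j
  obtain ⟨a, ha⟩ := hx j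
  obtain ⟨b, hb⟩ := hy j
  exact ⟨a + b, by simp [ha, hb]⟩

lemma isInt.sub {x y : Fin n → ℝ} (hx : isInt x) (hy : isInt y) : isInt (x - y) := by
  intro j
  obtain ⟨a, ha⟩ := hx j
  obtain ⟨b, hb⟩ := hy j
  exact ⟨a - b, by simp [ha, hb]⟩

lemma isInt.natCast_smul {x : Fin n → ℝ} (hx : isInt x) (k : ℕ) : isInt ((k : ℝ) • x) := by
  intro j
  obtain ⟨a, ha⟩ := hx j
  exact ⟨k * a, by simp [ha]⟩

lemma isInt.dotProduct {x y : Fin n → ℝ} (hx : isInt x) (hy : isInt y) :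
    ∃ z : ℤ, x ⬝ᵥ y = z := by
  choose a ha using hx
  choose b hb using hy
  refine ⟨∑ j, a j * b j, ?_⟩
  push_cast
  simp only [_root_.dotProduct, ha, hb]

lemma isInt_append_iff {u : Fin n → ℝ} {v : Fin m → ℝ} :
    isInt (Fin.append u v) ↔ isInt u ∧ isInt v :=
  ⟨fun h => ⟨fun j => by simpa using h (Fin.castAdd m j),
      fun j => by simpa using h (Fin.natAdd n j)⟩,
    fun ⟨hu, hv⟩ i => Fin.addCases (fun j => by simpa using hu j) (fun j => by simpa using hv j) i⟩

end Lattice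

section Polar

variable {n : ℕ} {P : Set (Fin n → ℝ)} {x : Fin n → ℝ}

lemma mem_polarDual {u : Fin n → ℝ} : u ∈ polarDual P ↔ ∀ p ∈ P, p ⬝ᵥ u ≤ 1 := Iff.rfl

lemma dotProduct_le_of_mem_smul {c : ℝ} (hc : 0 ≤ c) (hx : x ∈ c • P) {u : Fin n → ℝ}
    (hu : u ∈ polarDual P) : x ⬝ᵥ u ≤ c := by
  obtain ⟨p, hp, rfl⟩ := hx
  calc c • p ⬝ᵥ u = c * (p ⬝ᵥ u) := smul_dotProduct c p u
    _ ≤ c * 1 := mul_le_mul_of_nonneg_left (hu p hp) hc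
    _ = c := mul_one c

variable (hconv : Convex ℝ P) (hcl : IsClosed P) (h0 : (0 : Fin n → ℝ) ∈ P)
include hconv hcl h0

lemma mem_of_forall_dotProduct_le_one (hx : ∀ u ∈ polarDual P, x ⬝ᵥ u ≤ 1) : x ∈ P := by
  by_contra hxP
  obtain ⟨f, c, hfP, hfx⟩ := geometric_hahn_banach_closed_point hconv hcl hxP
  have hc : 0 < c := by simpa using hfP 0 h0
  set y : Fin n → ℝ := fun j => f (fun k => if j = k then 1 else 0) / c
  have hy : ∀ z, z ⬝ᵥ y = f z / c := by
    intro z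
    rw [show f z = (f : (Fin n → ℝ) →ₗ[ℝ] ℝ) z from rfl, LinearMap.pi_apply_eq_sum_univ,
      Finset.sum_div]
    simp [dotProduct, y, mul_div_assoc]
  have hyP : y ∈ polarDual P := mem_polarDual.2 fun p hp => by
    rw [hy, div_le_one hc]; exact (hfP p hp).le
  have := hx y hyP
  rw [hy, div_le_one hc] at this
  linarith

lemma mem_smul_of_forall_dotProduct_le {c : ℝ} (hc : 0 < c)
    (hx : ∀ u ∈ polarDual P, x ⬝ᵥ u ≤ c) : x ∈ c • P := by
  refine ⟨c⁻¹ • x, mem_of_forall_dotProduct_le_one hconv hcl h0 fun u hu => ?_,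
    smul_inv_smul₀ hc.ne' x⟩
  rw [smul_dotProduct, smul_eq_mul, inv_mul_le_one₀ hc]
  exact hx u hu

lemma eq_zero_of_forall_dotProduct_nonpos (hb : Bornology.IsBounded P)
    (hx : ∀ u ∈ polarDual P, x ⬝ᵥ u ≤ 0) : x = 0 := by
  obtain ⟨C, hC⟩ := isBounded_iff_forall_norm_le.1 hb
  have hk : ∀ k : ℕ, (k : ℝ) * ‖x‖ ≤ C := fun k => by
    have : (k : ℝ) • x ∈ P := mem_of_forall_dotProduct_le_one hconv hcl h0 fun u hu => by
      rw [smul_dotProduct, smul_eq_mul]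
      exact (mul_nonpos_of_nonneg_of_nonpos k.cast_nonneg (hx u hu)).trans zero_le_one
    simpa [norm_smul] using hC _ this
  by_contra hx0
  obtain ⟨k, hCk⟩ := exists_nat_gt (C / ‖x‖)
  rw [div_lt_iff₀ (norm_pos_iff.2 hx0)] at hCk
  linarith [hk k]

lemma mem_natCast_smul_of_forall_dotProduct_le (hb : Bornology.IsBounded P) {k : ℕ}
    (hx : ∀ u ∈ polarDual P, x ⬝ᵥ u ≤ k) : x ∈ (k : ℝ) • P := by
  rcases k.eq_zero_or_pos with rfl | hk
  · obtain rfl : x = 0 := eq_zero_of_forall_dotProduct_nonpos hconv hcl h0 hb (by simpa using hx)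
    exact zero_mem_smul_set h0
  · exact mem_smul_of_forall_dotProduct_le hconv hcl h0 (Nat.cast_pos.2 hk) hx

end Polar

lemma mem_floor_smul_of_isInt {n : ℕ} {P : Set (Fin n → ℝ)} (hconv : Convex ℝ P)
    (hcomp : IsCompact P) (h0 : (0 : Fin n → ℝ) ∈ P) (hdual : isLatticePolytope (polarDual P))
    {x : Fin n → ℝ} (hx : isInt x) {s : ℝ} (hs : 0 ≤ s) (hxs : x ∈ s • P) :
    x ∈ (⌊s⌋₊ : ℝ) • P := by
  obtain ⟨U, hUint, hU⟩ := hdual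
  refine mem_natCast_smul_of_forall_dotProduct_le hconv hcomp.isClosed h0 hcomp.isBounded
    fun u hu => ?_
  rw [hU] at hu
  refine convexHull_min (fun u hu => ?_)
    (convex_halfSpace_le ⟨dotProduct_add x, fun c u => dotProduct_smul c x u⟩ _) hu
  obtain ⟨z, hz⟩ := hx.dotProduct (hUint u hu)
  have hzs : (z : ℝ) ≤ s :=
    hz ▸ dotProduct_le_of_mem_smul hs hxs (hU ▸ subset_convexHull ℝ _ hu)
  show x ⬝ᵥ u ≤ ⌊s⌋₊
  rw [hz]
  exact_mod_cast (Int.le_floor.2 hzs).trans_eq (Int.natCast_floor_eq_floor hs).symm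

def IsLatticeSum {d : ℕ} (S : Set (Fin d → ℝ)) (k : ℕ) (x : Fin d → ℝ) : Prop :=
  ∃ f : Fin k → Fin d → ℝ, (∀ j, f j ∈ S ∧ isInt (f j)) ∧ x = ∑ j, f j

namespace IsLatticeSum

variable {d e : ℕ} {S T : Set (Fin d → ℝ)} {a b : ℕ} {x y : Fin d → ℝ}

lemma mono (h : IsLatticeSum S a x) (hST : S ⊆ T) : IsLatticeSum T a x :=
  let ⟨f, hf, hx⟩ := h
  ⟨f, fun j => ⟨hST (hf j).1, (hf j).2⟩, hx⟩

lemma add (hx : IsLatticeSum S a x) (hy : IsLatticeSum S b y) :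
    IsLatticeSum S (a + b) (x + y) := by
  obtain ⟨f, hf, rfl⟩ := hx
  obtain ⟨g, hg, rfl⟩ := hy
  refine ⟨Fin.append f g, fun j => ?_, by simp [Fin.sum_univ_add]⟩
  exact Fin.addCases (fun j => by simpa using hf j) (fun j => by simpa using hg j) j

lemma map (L : (Fin d → ℝ) →ₗ[ℝ] (Fin e → ℝ)) (hL : ∀ y, isInt y → isInt (L y))
    (h : IsLatticeSum S a x) : IsLatticeSum (L '' S) a (L x) := by
  obtain ⟨f, hf, rfl⟩ := h
  exact ⟨L ∘ f, fun j => ⟨mem_image_of_mem L (hf j).1, hL _ (hf j).2⟩, map_sum L f _⟩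

lemma of_add_natCast_smul {w : Fin d → ℝ} (h : IsLatticeSum S a (x + (a : ℝ) • w))
    (hw : isInt w) : IsLatticeSum ((· - w) '' S) a x := by
  obtain ⟨f, hf, hx⟩ := h
  refine ⟨fun j => f j - w, fun j => ⟨mem_image_of_mem _ (hf j).1, (hf j).2.sub hw⟩, ?_⟩
  rw [Finset.sum_sub_distrib, ← hx, Finset.sum_const, Finset.card_univ, Fintype.card_fin,
    ← Nat.cast_smul_eq_nsmul ℝ, add_sub_cancel_right]

end IsLatticeSum

lemma isIntegrallyClosed.isLatticeSum {d : ℕ} {P : Set (Fin d → ℝ)} (hP : isIntegrallyClosed P)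
    {k : ℕ} {x : Fin d → ℝ} (hx : x ∈ (k : ℝ) • P) (hxint : isInt x) : IsLatticeSum P k x := by
  rcases k.eq_zero_or_pos with rfl | hk
  · obtain rfl : x = 0 := zero_smul_set_subset P (by simpa using hx)
    exact ⟨finZeroElim, finZeroElim, by simp⟩
  · exact hP k hk x hx hxint

section FreeSum

variable {R : Type*} [Semiring R] (n m : ℕ)

def appendLeft : (Fin n → R) →ₗ[R] (Fin (n + m) → R) where
  toFun p := Fin.append p 0
  map_add' p p' := by rw [Fin.append_add_append, add_zero]
  map_smul' c p := by rw [Fin.smul_append, smul_zero]; rfl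

def appendRight : (Fin m → R) →ₗ[R] (Fin (n + m) → R) where
  toFun q := Fin.append 0 q
  map_add' q q' := by rw [Fin.append_add_append, add_zero]
  map_smul' c q := by rw [Fin.smul_append, smul_zero]; rfl

variable {n m}

@[simp] lemma appendLeft_apply (p : Fin n → R) : appendLeft n m p = Fin.append p 0 := rfl

@[simp] lemma appendRight_apply (q : Fin m → R) : appendRight n m q = Fin.append 0 q := rfl

lemma appendLeft_add_appendRight (p : Fin n → R) (q : Fin m → R) :
    appendLeft n m p + appendRight n m q = Fin.append p q := by
  simp [Fin.append_add_append]

lemma isInt_appendLeft (p : Fin n → ℝ) (hp : isInt p) : isInt (appendLeft n m p) :=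
  isInt_append_iff.2 ⟨hp, isInt_zero⟩

lemma isInt_appendRight (q : Fin m → ℝ) (hq : isInt q) : isInt (appendRight n m q) :=
  isInt_append_iff.2 ⟨isInt_zero, hq⟩

end FreeSum

lemma mem_smul_convexHull_union {E : Type*} [AddCommGroup E] [Module ℝ E] {A B : Set E}
    (hA : Convex ℝ A) (hB : Convex ℝ B) (hA₀ : A.Nonempty) (hB₀ : B.Nonempty) {c : ℝ}
    (hc : 0 ≤ c) {x : E} (hx : x ∈ c • convexHull ℝ (A ∪ B)) :
    ∃ s t : ℝ, 0 ≤ s ∧ 0 ≤ t ∧ s + t = c ∧ ∃ a ∈ A, ∃ b ∈ B, x = s • a + t • b := by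
  obtain ⟨z, hz, rfl⟩ := hx
  rw [hA.convexHull_union hB hA₀ hB₀, mem_convexJoin] at hz
  obtain ⟨a, ha, b, hb, α, β, hα, hβ, hαβ, rfl⟩ := hz
  exact ⟨c * α, c * β, mul_nonneg hc hα, mul_nonneg hc hβ, by rw [← mul_add, hαβ, mul_one],
    a, ha, b, hb, by simp only [smul_add, smul_smul]⟩

lemma Convex.smul_sub_add_smul_mem_smul {E : Type*} [AddCommGroup E] [Module ℝ E] {Q : Set E}
    (hQ : Convex ℝ Q) {q w : E} (hq : q ∈ Q) (hw : w ∈ Q) {t b : ℝ} (ht : 0 ≤ t) (htb : t ≤ b) :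
    t • (q - w) + b • w ∈ b • Q := by
  have hQb := hQ.add_smul ht (sub_nonneg.2 htb)
  rw [add_sub_cancel] at hQb
  rw [hQb, show t • (q - w) + b • w = t • q + (b - t) • w by module]
  exact add_mem_add (smul_mem_smul_set hq) (smul_mem_smul_set hw)

theorem stmt_5_general (n m : ℕ) (v : Fin (n+1) → Fin n → ℝ) (w : Fin (m+1) → Fin m → ℝ)
    (hwint : ∀ k, isInt (w k))
    (hPrefl : isReflexive0 (convexHull ℝ (Set.range v)))
    (hPic : isIntegrallyClosed (convexHull ℝ (Set.range v)))
    (hQic : isIntegrallyClosed (convexHull ℝ (Set.range w)))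
    (i : Fin (m+1)) :
    isIntegrallyClosed (convexHull ℝ
      ((fun p : Fin n → ℝ => Fin.append p (0 : Fin m → ℝ)) '' convexHull ℝ (Set.range v) ∪
       (fun q : Fin m → ℝ => Fin.append (0 : Fin n → ℝ) (q - w i)) ''
         convexHull ℝ (Set.range w))) := by
  set P := convexHull ℝ (range v)
  set Q := convexHull ℝ (range w)
  obtain ⟨-, hP₀, hPdual⟩ := hPrefl
  have hP : Convex ℝ P := convex_convexHull ℝ _
  have hQ : Convex ℝ Q := convex_convexHull ℝ _
  have hwiQ : w i ∈ Q := subset_convexHull ℝ _ (mem_range_self i)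
  have hB : (fun q => Fin.append (0 : Fin n → ℝ) (q - w i)) '' Q =
      appendRight n m '' ((· - w i) '' Q) := by
    rw [image_image]; rfl
  intro N _ x hx hxint
  obtain ⟨s, t, hs, ht, hst, _, ⟨p, hp, rfl⟩, _, ⟨q, hq, rfl⟩, rfl⟩ :=
    mem_smul_convexHull_union (hP.linear_image (appendLeft n m))
      (by simpa only [image_image, neg_add_eq_sub, appendRight_apply] using
        (hQ.translate (-w i)).linear_image (appendRight n m))
      ⟨_, mem_image_of_mem _ (interior_subset hP₀)⟩ ⟨_, mem_image_of_mem _ hwiQ⟩ N.cast_nonneg hx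
  simp only [appendLeft_apply, Fin.smul_append, Fin.append_add_append, smul_zero, add_zero,
    zero_add] at hxint ⊢
  obtain ⟨hx₁, hx₂⟩ := isInt_append_iff.1 hxint
  have hsP := mem_floor_smul_of_isInt hP ((finite_range v).isCompact_convexHull ℝ)
    (interior_subset hP₀) hPdual hx₁ hs (smul_mem_smul_set hp)
  obtain ⟨b, rfl⟩ : ∃ b, N = ⌊s⌋₊ + b := Nat.exists_eq_add_of_le (Nat.floor_le_of_le (by linarith))
  have htb : t ≤ b := by push_cast at hst; linarith [Nat.floor_le hs]
  have htQ := hQ.smul_sub_add_smul_mem_smul hq hwiQ ht htb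
  rw [← appendLeft_add_appendRight]
  refine (((hPic.isLatticeSum hsP hx₁).map _ isInt_appendLeft).mono ?_).add
    ((((hQic.isLatticeSum htQ (hx₂.add ((hwint i).natCast_smul b))).of_add_natCast_smul
      (hwint i)).map _ isInt_appendRight).mono ?_)
  · exact subset_union_left.trans (subset_convexHull ℝ _)
  · exact hB ▸ subset_union_right.trans (subset_convexHull ℝ _)

/-- If `P` and `Q` are integrally closed lattice simplices with `0` in the
interior of `P` and `P` reflexive, then the free sum simplex `P *ᵢ Q` is integrally
closed. -/
theorem stmt_5 (n m : ℕ) (v : Fin (n+1) → Fin n → ℝ) (w : Fin (m+1) → Fin m → ℝ)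
    (hv : AffineIndependent ℝ v) (hw : AffineIndependent ℝ w)
    (hvint : ∀ j, isInt (v j)) (hwint : ∀ k, isInt (w k))
    (hPrefl : isReflexive0 (convexHull ℝ (Set.range v)))
    (hPic : isIntegrallyClosed (convexHull ℝ (Set.range v)))
    (hQic : isIntegrallyClosed (convexHull ℝ (Set.range w)))
    (i : Fin (m+1)) :
    isIntegrallyClosed (convexHull ℝ
      ((fun p : Fin n → ℝ => Fin.append p (0 : Fin m → ℝ)) '' convexHull ℝ (Set.range v) ∪
       (fun q : Fin m → ℝ => Fin.append (0 : Fin n → ℝ) (q - w i)) ''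
         convexHull ℝ (Set.range w))) :=
  stmt_5_general n m v w hwint hPrefl hPic hQic i
end

section
/- For d ≥ 3, the h*-vector of the simplex Δ with vertices e_1, ..., e_d, (-d, -d-1, ..., -d-1) in R^d equals (1, d+2, d+2, ..., d+2, 1); in particular it is symmetric and unimodal. -/
open Pointwise in
/-- The Ehrhart series of `P`: the power series whose `m`-th coefficient is the number
of lattice points of the `m`-th dilate `mP`. -/
noncomputable def ehr {n : ℕ} (P : Set (Fin n → ℝ)) : PowerSeries ℚ :=
  PowerSeries.mk fun m => (Set.ncard {x : Fin n → ℝ | x ∈ (m : ℝ) • P ∧ isInt x} : ℚ)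


/-- The vertices `e_1, ..., e_d, (-d, -d-1, ..., -d-1)` of the simplex `Δ_Q` with
`Q = (1, d, d+1, ..., d+1)`. -/
noncomputable def dVert (d : ℕ) : Fin (d+1) → Fin d → ℝ :=
  Fin.snoc (fun k j => if j = k then 1 else 0)
    (fun j => if (j : ℕ) = 0 then -(d : ℝ) else -(d : ℝ) - 1)

/-!
Lift the simplex to height one: a lattice point of `mΔ` is `∑ cᵢ vᵢ` with `cᵢ ≥ 0`,
`∑ cᵢ = m`, and splitting each `cᵢ` into fractional and integral parts identifies the lattice
points of `mΔ` with pairs (lattice point of the half-open fundamental parallelepiped `Π`,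
composition of `m - height` into `d + 1` parts). Hence
`Ehr(Δ) = (∑_{p ∈ Π} t ^ height p) / (1 - t) ^ (d + 1)`.

For our simplex a point of `Π` is determined by its last coefficient `k / (d (d + 1))`,
`0 ≤ k < d (d + 1)`; writing `k = d a + b` with `a ≤ d`, `b < d`, its height is `b + [b < a]`,
and counting the pairs `(a, b)` of each height gives `(1, d + 2, ..., d + 2, 1)`.
-/

open Finset Pointwise

noncomputable section

def integerLattice (n : ℕ) : AddSubgroup (Fin n → ℝ) where
  carrier := {x | isInt x}
  add_mem' {x y} hx hy j := by
    obtain ⟨a, ha⟩ := hx j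
    obtain ⟨b, hb⟩ := hy j
    exact ⟨a + b, by simp [ha, hb]⟩
  zero_mem' _ := ⟨0, by simp⟩
  neg_mem' {x} hx j := by
    obtain ⟨a, ha⟩ := hx j
    exact ⟨-a, by simp [ha]⟩

theorem mem_integerLattice {n : ℕ} {x : Fin n → ℝ} : x ∈ integerLattice n ↔ isInt x := Iff.rfl

theorem PowerSeries.coeff_invOneSubPow_val {S : Type*} [CommRing S] {c : ℕ} (hc : 0 < c)
    (j : ℕ) : PowerSeries.coeff j (PowerSeries.invOneSubPow S c).val = c.multichoose j := by
  rw [PowerSeries.invOneSubPow_val_eq_mk_sub_one_add_choose_of_pos _ _ hc, PowerSeries.coeff_mk,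
    Nat.multichoose_eq, Nat.choose_symm_add, Nat.sub_add_comm hc]

section LatticeSimplex

variable {ι : Type*} [Fintype ι] {n : ℕ}

theorem mem_convexHull_range_iff (v : ι → Fin n → ℝ) (x : Fin n → ℝ) :
    x ∈ convexHull ℝ (Set.range v) ↔
      ∃ w : ι → ℝ, (∀ i, 0 ≤ w i) ∧ ∑ i, w i = 1 ∧ ∑ i, w i • v i = x := by
  classical
  refine ⟨fun hx => ?_, fun ⟨w, hw₀, hw₁, hx⟩ =>
    mem_convexHull_of_exists_fintype w v hw₀ hw₁ (Set.mem_range_self ·) hx⟩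
  refine convexHull_min (t := {x | ∃ w : ι → ℝ, (∀ i, 0 ≤ w i) ∧ ∑ i, w i = 1 ∧
    ∑ i, w i • v i = x}) ?_ ?_ hx
  · rintro _ ⟨i, rfl⟩
    exact ⟨Pi.single i 1, fun j => by by_cases h : j = i <;> simp [h], by simp, by simp⟩
  · rintro _ ⟨w, hw₀, hw₁, rfl⟩ _ ⟨w', hw₀', hw₁', rfl⟩ a b ha hb hab
    refine ⟨a • w + b • w', fun i => ?_, ?_, ?_⟩
    · exact add_nonneg (mul_nonneg ha (hw₀ i)) (mul_nonneg hb (hw₀' i))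
    · simp [sum_add_distrib, ← mul_sum, hw₁, hw₁', hab]
    · simp [add_smul, mul_smul, sum_add_distrib, smul_sum]

theorem mem_smul_convexHull_range_iff [Nonempty ι] (v : ι → Fin n → ℝ) {t : ℝ} (ht : 0 ≤ t)
    (x : Fin n → ℝ) :
    x ∈ t • convexHull ℝ (Set.range v) ↔
      ∃ c : ι → ℝ, (∀ i, 0 ≤ c i) ∧ ∑ i, c i = t ∧ ∑ i, c i • v i = x := by
  rcases ht.eq_or_lt with rfl | ht
  · have hne : (convexHull ℝ (Set.range v)).Nonempty :=
      (Set.range_nonempty v).mono (subset_convexHull ℝ _)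
    rw [Set.zero_smul_set hne, Set.mem_zero]
    refine ⟨fun hx => ⟨0, fun _ => le_rfl, by simp, by simp [hx]⟩, ?_⟩
    rintro ⟨c, hc₀, hc, rfl⟩
    have : c = 0 := funext ((sum_eq_zero_iff_of_nonneg fun i _ => hc₀ i).1 hc
      · (mem_univ _))
    simp [this]
  · rw [Set.mem_smul_set_iff_inv_smul_mem₀ ht.ne', mem_convexHull_range_iff]
    constructor
    · rintro ⟨w, hw₀, hw₁, hx⟩
      refine ⟨t • w, fun i => mul_nonneg ht.le (hw₀ i), ?_, ?_⟩
      · simp [← mul_sum, hw₁]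
      · simp [mul_smul, ← smul_sum, hx, smul_inv_smul₀ ht.ne']
    · rintro ⟨c, hc₀, hc, rfl⟩
      refine ⟨t⁻¹ • c, fun i => mul_nonneg (inv_nonneg.2 ht.le) (hc₀ i), ?_, ?_⟩
      · simp [← mul_sum, hc, ht.ne']
      · simp [mul_smul, smul_sum]

theorem isInt_sum_natCast_smul {v : ι → Fin n → ℝ} (hv : ∀ i, isInt (v i)) (k : ι → ℕ) :
    isInt (∑ i, (k i : ℝ) • v i) :=
  (integerLattice n).sum_mem fun i _ => by
    rw [Nat.cast_smul_eq_nsmul]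
    exact (integerLattice n).nsmul_mem (hv i) _

/-- The lattice points `∑ i, f i • (v i, 1)` of the half-open parallelepiped spanned by the
lifted vertices `(v i, 1)`, recorded by their coefficient vectors `f`; the last coordinate of
such a point is `height f`. -/
def fundPar (v : ι → Fin n → ℝ) : Set (ι → ℝ) :=
  {f | (∀ i, f i ∈ Set.Ico (0 : ℝ) 1) ∧ isInt (∑ i, f i • v i) ∧ ∃ k : ℤ, ∑ i, f i = k}

def height (f : ι → ℝ) : ℕ := ⌊∑ i, f i⌋₊

theorem natCast_height {f : ι → ℝ} (hf : ∀ i, 0 ≤ f i) (hk : ∃ k : ℤ, ∑ i, f i = k) :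
    (height f : ℝ) = ∑ i, f i := by
  obtain ⟨k, hk⟩ := hk
  have hk₀ : 0 ≤ k := by exact_mod_cast hk ▸ sum_nonneg fun i _ => hf i
  lift k to ℕ using hk₀
  rw [height, hk, Int.cast_natCast, Nat.floor_natCast]

def dilateCoeffs (v : ι → Fin n → ℝ) (m : ℕ) : Set (ι → ℝ) :=
  {c | (∀ i, 0 ≤ c i) ∧ ∑ i, c i = m ∧ isInt (∑ i, c i • v i)}

theorem latticePoints_smul_convexHull_eq_image [Nonempty ι] (v : ι → Fin n → ℝ) (m : ℕ) :
    {x | x ∈ (m : ℝ) • convexHull ℝ (Set.range v) ∧ isInt x} =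
      (fun c => ∑ i, c i • v i) '' dilateCoeffs v m := by
  ext x
  simp only [Set.mem_ofPred_eq, mem_smul_convexHull_range_iff v m.cast_nonneg, Set.mem_image,
    dilateCoeffs]
  constructor
  · rintro ⟨⟨c, hc₀, hc, rfl⟩, hx⟩
    exact ⟨c, ⟨hc₀, hc, hx⟩, rfl⟩
  · rintro ⟨c, ⟨hc₀, hc, hx⟩, rfl⟩
    exact ⟨⟨c, hc₀, hc, rfl⟩, hx⟩

/-- Splitting coefficients into fractional and integral parts: every lattice point of the cone
over the simplex is uniquely a parallelepiped point plus an `ℕ`-combination of the `(v i, 1)`. -/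
def dilateCoeffsEquiv {v : ι → Fin n → ℝ} (hv : ∀ i, isInt (v i)) (m : ℕ) :
    dilateCoeffs v m ≃ Σ f : fundPar v, {k : ι → ℕ // height (f : ι → ℝ) + ∑ i, k i = m} where
  toFun c :=
    have hfrac : (fun i => c.1 i - ⌊c.1 i⌋₊) ∈ fundPar v := by
      obtain ⟨hc₀, hc, hx⟩ := c.2
      refine ⟨fun i => ⟨sub_nonneg.2 (Nat.floor_le (hc₀ i)), ?_⟩, ?_, ⟨m - ∑ i, ⌊c.1 i⌋₊, ?_⟩⟩
      · linarith [Nat.lt_floor_add_one (c.1 i)]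
      · simpa [sub_smul, sum_sub_distrib, mem_integerLattice] using
          (integerLattice n).sub_mem hx (isInt_sum_natCast_smul hv fun i => ⌊c.1 i⌋₊)
      · simp [sum_sub_distrib, hc]
    ⟨⟨_, hfrac⟩, ⟨fun i => ⌊c.1 i⌋₊, by
      have := natCast_height (fun i => (hfrac.1 i).1) hfrac.2.2
      simp only [sum_sub_distrib, c.2.2.1] at this
      exact_mod_cast (eq_sub_iff_add_eq.1 this : _)⟩⟩
  invFun p := ⟨fun i => p.1.1 i + p.2.1 i, by
    obtain ⟨hf₀, hfZ, hfk⟩ := p.1.2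
    refine ⟨fun i => add_nonneg (hf₀ i).1 (p.2.1 i).cast_nonneg, ?_, ?_⟩
    · rw [sum_add_distrib, ← natCast_height (fun i => (hf₀ i).1) hfk]
      exact_mod_cast p.2.2
    · simpa [add_smul, sum_add_distrib, mem_integerLattice] using
        (integerLattice n).add_mem hfZ (isInt_sum_natCast_smul hv p.2.1)⟩
  left_inv c := Subtype.ext <| funext fun i => sub_add_cancel _ _
  right_inv := by
    rintro ⟨⟨f, hf₀, -⟩, k, -⟩
    have hfloor (i : ι) : ⌊f i + k i⌋₊ = k i := by
      rw [Nat.floor_add_natCast (hf₀ i).1, Nat.floor_eq_zero.2 (hf₀ i).2, zero_add]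
    exact Sigma.subtype_ext (Subtype.ext <| funext fun i => by simp [hfloor])
      (funext hfloor)

instance finite_subtype_add_sum_eq (a m : ℕ) : Finite {k : ι → ℕ // a + ∑ i, k i = m} := by
  refine Finite.of_injective (fun k i => (⟨k.1 i, ?_⟩ : Fin (m + 1))) fun k k' h => ?_
  · have := single_le_sum (fun j _ => Nat.zero_le (k.1 j)) (mem_univ i)
    have := k.2
    omega
  · exact Subtype.ext <| funext fun i => congr_arg Fin.val (congr_fun h i)

theorem natCard_subtype_add_sum_eq (a m : ℕ) :
    Nat.card {k : ι → ℕ // a + ∑ i, k i = m} =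
      if a ≤ m then (Fintype.card ι).multichoose (m - a) else 0 := by
  classical
  split_ifs with h
  · rw [← Sym.card_sym_eq_multichoose, ← Nat.card_eq_fintype_card]
    exact Nat.card_congr <| (Equiv.subtypeEquivRight fun k => by omega).trans
      (Sym.equivNatSumOfFintype ι (m - a)).symm
  · have : IsEmpty {k : ι → ℕ // a + ∑ i, k i = m} := ⟨fun k => h (k.2 ▸ Nat.le_add_right _ _)⟩
    exact Nat.card_of_isEmpty

theorem natCard_dilateCoeffs {v : ι → Fin n → ℝ} (hv : ∀ i, isInt (v i))
    (hP : (fundPar v).Finite) (m : ℕ) :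
    Nat.card (dilateCoeffs v m) =
      ∑ f ∈ hP.toFinset,
        if height f ≤ m then (Fintype.card ι).multichoose (m - height f) else 0 := by
  have := hP.fintype
  rw [Nat.card_congr (dilateCoeffsEquiv hv m), Nat.card_sigma,
    sum_subtype hP.toFinset fun _ => hP.mem_toFinset]
  exact sum_congr rfl fun f _ => natCard_subtype_add_sum_eq _ _

def hStarPoly {v : ι → Fin n → ℝ} (hP : (fundPar v).Finite) : Polynomial ℚ :=
  ∑ f ∈ hP.toFinset, Polynomial.X ^ height f

theorem coeff_hStarPoly {v : ι → Fin n → ℝ} (hP : (fundPar v).Finite) (k : ℕ) :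
    (hStarPoly hP).coeff k = #{f ∈ hP.toFinset | height f = k} := by
  simp [hStarPoly, Polynomial.coeff_X_pow, eq_comm]

theorem ehr_convexHull_eq_hStarPoly_mul [Nonempty ι] {v : ι → Fin n → ℝ}
    (hv : AffineIndependent ℝ v) (hZ : ∀ i, isInt (v i)) (hP : (fundPar v).Finite) :
    ehr (convexHull ℝ (Set.range v)) =
      (hStarPoly hP : PowerSeries ℚ) * (PowerSeries.invOneSubPow ℚ (Fintype.card ι)).val := by
  ext m
  have hinj : Set.InjOn (fun c : ι → ℝ => ∑ i, c i • v i) (dilateCoeffs v m) :=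
    fun c hc c' hc' h => funext fun i =>
      hv.eq_of_sum_eq_sum (hc.2.1.trans hc'.2.1.symm) h i (mem_univ i)
  rw [ehr, PowerSeries.coeff_mk, latticePoints_smul_convexHull_eq_image,
    hinj.ncard_image, ← Nat.card_coe_set_eq, natCard_dilateCoeffs hZ hP, hStarPoly,
    ← Polynomial.coeToPowerSeries.ringHom_apply, map_sum, sum_mul, map_sum]
  push_cast
  refine sum_congr rfl fun f _ => ?_
  rw [map_pow, Polynomial.coeToPowerSeries.ringHom_apply, Polynomial.coe_X,
    PowerSeries.coeff_X_pow_mul',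
    PowerSeries.coeff_invOneSubPow_val Fintype.card_pos]

theorem eq_hStarPoly_of_coe_eq_ehr_mul [Nonempty ι] {v : ι → Fin n → ℝ}
    (hv : AffineIndependent ℝ v) (hZ : ∀ i, isInt (v i)) (hP : (fundPar v).Finite)
    {p : Polynomial ℚ} (hp : (p : PowerSeries ℚ) =
      ehr (convexHull ℝ (Set.range v)) * (1 - PowerSeries.X) ^ Fintype.card ι) :
    p = hStarPoly hP := by
  rw [ehr_convexHull_eq_hStarPoly_mul hv hZ hP, mul_assoc,
    ← PowerSeries.invOneSubPow_inv_eq_one_sub_pow, Units.val_inv, mul_one] at hp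
  exact_mod_cast hp

end LatticeSimplex

section DSimplex

variable {d : ℕ}

/-- The last vertex of `dVert d` is `-vertexWeight d`. -/
def vertexWeight (d : ℕ) (j : Fin d) : ℝ := if (j : ℕ) = 0 then d else d + 1

theorem sum_smul_dVert_apply (c : Fin (d + 1) → ℝ) (j : Fin d) :
    (∑ i, c i • dVert d i) j = c j.castSucc - c (Fin.last d) * vertexWeight d j := by
  simp only [Finset.sum_apply, Fin.sum_univ_castSucc, Pi.smul_apply, smul_eq_mul, dVert,
    Fin.snoc_castSucc, Fin.snoc_last, mul_ite, mul_one, mul_zero, sum_ite_eq,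
    mem_univ, if_true, vertexWeight]
  split_ifs <;> ring

theorem sum_vertexWeight (hd : 1 ≤ d) : ∑ j, vertexWeight d j = d * (d + 1) - 1 := by
  obtain ⟨e, rfl⟩ : ∃ e, d = e + 1 := ⟨d - 1, by omega⟩
  simp only [vertexWeight, Fin.val_eq_zero_iff, Nat.cast_add, Nat.cast_one, Fin.sum_univ_succ,
    ↓reduceIte, Fin.succ_ne_zero, sum_const, card_univ, Fintype.card_fin, smul_add, nsmul_eq_mul,
    mul_one]
  ring

theorem sum_eq_of_sub_mul_vertexWeight (hd : 1 ≤ d) (c : Fin (d + 1) → ℝ) (z : Fin d → ℝ)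
    (hz : ∀ j, c j.castSucc - c (Fin.last d) * vertexWeight d j = z j) :
    ∑ i, c i = ∑ j, z j + c (Fin.last d) * (d * (d + 1)) := by
  simp only [Fin.sum_univ_castSucc, ← hz, sum_sub_distrib, ← mul_sum,
    sum_vertexWeight hd]
  ring

theorem affineIndependent_dVert (hd : 1 ≤ d) : AffineIndependent ℝ (dVert d) := by
  rw [affineIndependent_iff_of_fintype]
  intro c hc hcomb
  rw [weightedVSub_eq_linear_combination _ hc] at hcomb
  have hcast (j : Fin d) : c j.castSucc - c (Fin.last d) * vertexWeight d j = 0 := by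
    rw [← sum_smul_dVert_apply, hcomb, Pi.zero_apply]
  have hlast : c (Fin.last d) = 0 := by
    have := sum_eq_of_sub_mul_vertexWeight hd c 0 hcast
    simp only [hc, Pi.zero_apply, sum_const_zero, zero_add] at this
    have : (0 : ℝ) < d * (d + 1) := by positivity
    nlinarith
  intro i
  induction i using Fin.lastCases with
  | last => exact hlast
  | cast j => simpa [hlast] using hcast j

theorem isInt_dVert (i : Fin (d + 1)) : isInt (dVert d i) := by
  intro j
  induction i using Fin.lastCases with
  | last => exact ⟨if (j : ℕ) = 0 then -d else -d - 1, by simp [dVert]⟩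
  | cast k => exact ⟨if j = k then 1 else 0, by simp [dVert]⟩

/-- The parallelepiped point whose last coefficient is `k / (d (d + 1))` with `k = d a + b`;
its other coefficients are the fractional parts of `k / (d + 1)` and `k / d`. -/
def parPoint (d : ℕ) (p : ℕ × ℕ) : Fin (d + 1) → ℝ :=
  Fin.snoc (fun j => if (j : ℕ) = 0 then ((p.2 : ℝ) - p.1) / (d + 1) + (if p.2 < p.1 then 1 else 0)
    else (p.2 : ℝ) / d) ((d * p.1 + p.2) / (d * (d + 1)))

theorem exists_parPoint_castSucc_sub_eq (hd : 1 ≤ d) (p : ℕ × ℕ) (j : Fin d) : ∃ z : ℤ,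
    parPoint d p j.castSucc - parPoint d p (Fin.last d) * vertexWeight d j = z := by
  have : (d : ℝ) ≠ 0 := by positivity
  simp only [parPoint, Fin.snoc_castSucc, Fin.snoc_last, vertexWeight]
  split_ifs
  · refine ⟨1 - p.1, ?_⟩
    push_cast
    field_simp
    ring
  · exact ⟨-p.1, by push_cast; field_simp; ring⟩
  · exact ⟨-p.1, by push_cast; field_simp; ring⟩

theorem sum_parPoint (hd : 1 ≤ d) (p : ℕ × ℕ) :
    ∑ i, parPoint d p i = p.2 + if p.2 < p.1 then 1 else 0 := by
  obtain ⟨e, rfl⟩ : ∃ e, d = e + 1 := ⟨d - 1, by omega⟩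
  rw [Fin.sum_univ_castSucc]
  simp only [parPoint, Fin.snoc_castSucc, Fin.snoc_last]
  rw [Fin.sum_univ_succ]
  simp only [Fin.coe_ofNat_eq_mod, Nat.zero_mod, ↓reduceIte, Nat.cast_add, Nat.cast_one,
    Fin.val_succ, Nat.add_eq_zero_iff, one_ne_zero, and_false, sum_const, card_univ,
    Fintype.card_fin, nsmul_eq_mul]
  split_ifs <;> field_simp <;> ring

theorem parPoint_mem_Ico (hd : 1 ≤ d) {p : ℕ × ℕ} (hp : p ∈ range (d + 1) ×ˢ range d)
    (i : Fin (d + 1)) : parPoint d p i ∈ Set.Ico (0 : ℝ) 1 := by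
  obtain ⟨a, b⟩ := p
  simp only [mem_product, mem_range] at hp
  have ha : (a : ℝ) ≤ d := by exact_mod_cast Nat.lt_succ_iff.1 hp.1
  have hb : (b : ℝ) + 1 ≤ d := by exact_mod_cast hp.2
  have hd' : (1 : ℝ) ≤ d := by exact_mod_cast hd
  induction i using Fin.lastCases with
  | last =>
    simp only [parPoint, Fin.snoc_last, Set.mem_Ico]
    constructor
    · positivity
    · rw [div_lt_one (by positivity)]; nlinarith
  | cast j =>
    simp only [parPoint, Fin.snoc_castSucc, Set.mem_Ico]
    split_ifs with hj hab
    · rw [div_add_one (by positivity), le_div_iff₀ (by positivity), div_lt_one (by positivity)]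
      have : (b : ℝ) < a := by exact_mod_cast hab
      constructor <;> linarith
    · rw [add_zero, le_div_iff₀ (by positivity), div_lt_one (by positivity)]
      have : (a : ℝ) ≤ b := by exact_mod_cast not_lt.1 hab
      constructor <;> linarith
    · rw [le_div_iff₀ (by positivity), div_lt_one (by positivity)]
      constructor <;> linarith

theorem parPoint_mem_fundPar (hd : 1 ≤ d) {p : ℕ × ℕ} (hp : p ∈ range (d + 1) ×ˢ range d) :
    parPoint d p ∈ fundPar (dVert d) := by
  refine ⟨parPoint_mem_Ico hd hp, fun j => ?_, ⟨p.2 + if p.2 < p.1 then 1 else 0, ?_⟩⟩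
  · rw [sum_smul_dVert_apply]
    exact exists_parPoint_castSucc_sub_eq hd p j
  · rw [sum_parPoint hd]
    push_cast
    rfl

theorem eq_of_mem_Ico_of_sub_eq_intCast {x y : ℝ} (hx : x ∈ Set.Ico 0 1) (hy : y ∈ Set.Ico 0 1)
    {z : ℤ} (h : x - y = z) : x = y := by
  rw [← Int.fract_eq_self.2 hx, ← Int.fract_eq_self.2 hy]
  exact Int.fract_eq_fract.2 ⟨z, h⟩

theorem exists_natCast_eq_of_mem_fundPar (hd : 1 ≤ d) {f : Fin (d + 1) → ℝ}
    (hf : f ∈ fundPar (dVert d)) :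
    ∃ k < d * (d + 1), f (Fin.last d) * (d * (d + 1)) = k := by
  obtain ⟨hIco, hZ, K, hK⟩ := hf
  choose z hz using fun j => hZ j
  simp only [sum_smul_dVert_apply] at hz
  have hmul : f (Fin.last d) * (d * (d + 1)) = ((K - ∑ j, z j : ℤ) : ℝ) := by
    push_cast
    linarith [sum_eq_of_sub_mul_vertexWeight hd f (fun j => z j) hz]
  obtain ⟨hf₀, hf₁⟩ := hIco (Fin.last d)
  have hN : (0 : ℝ) < d * (d + 1) := by positivity
  have hz₀ : 0 ≤ K - ∑ j, z j := by exact_mod_cast hmul ▸ mul_nonneg hf₀ hN.le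
  lift K - ∑ j, z j to ℕ using hz₀ with k
  rw [Int.cast_natCast] at hmul
  refine ⟨k, ?_, hmul⟩
  exact_mod_cast (show (k : ℝ) < d * (d + 1) by nlinarith)

theorem exists_eq_parPoint_of_mem_fundPar (hd : 1 ≤ d) {f : Fin (d + 1) → ℝ}
    (hf : f ∈ fundPar (dVert d)) : ∃ p ∈ range (d + 1) ×ˢ range d, parPoint d p = f := by
  obtain ⟨k, hkN, hk⟩ := exists_natCast_eq_of_mem_fundPar hd hf
  have hp : (k / d, k % d) ∈ range (d + 1) ×ˢ range d := by
    simp only [mem_product, mem_range]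
    exact ⟨Nat.div_lt_of_lt_mul hkN, Nat.mod_lt k hd⟩
  have hlast : parPoint d (k / d, k % d) (Fin.last d) = f (Fin.last d) := by
    rw [parPoint, Fin.snoc_last, div_eq_iff (by positivity), hk]
    exact_mod_cast Nat.div_add_mod k d
  refine ⟨_, hp, funext fun i => ?_⟩
  induction i using Fin.lastCases with
  | last => exact hlast
  | cast j =>
    obtain ⟨z, hz⟩ := exists_parPoint_castSucc_sub_eq hd (k / d, k % d) j
    obtain ⟨z', hz'⟩ := hf.2.1 j
    rw [sum_smul_dVert_apply] at hz'
    rw [hlast] at hz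
    refine eq_of_mem_Ico_of_sub_eq_intCast (parPoint_mem_Ico hd hp _) (hf.1 _) (z := z - z') ?_
    push_cast
    linarith

theorem fundPar_dVert (hd : 1 ≤ d) :
    fundPar (dVert d) = ↑((range (d + 1) ×ˢ range d).image (parPoint d)) := by
  ext f
  rw [coe_image, Set.mem_image]
  exact ⟨exists_eq_parPoint_of_mem_fundPar hd, fun ⟨p, hp, hpf⟩ => hpf ▸ parPoint_mem_fundPar hd hp⟩

theorem injOn_parPoint (hd : 1 ≤ d) : Set.InjOn (parPoint d) ↑(range (d + 1) ×ˢ range d) := by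
  rintro ⟨a, b⟩ hp ⟨a', b'⟩ hp' h
  simp only [coe_product, coe_range, Set.mem_prod, Set.mem_Iio] at hp hp'
  have hlast := congr_fun h (Fin.last d)
  simp only [parPoint, Fin.snoc_last] at hlast
  rw [div_left_inj' (by positivity)] at hlast
  have hk : d * a + b = d * a' + b' := by exact_mod_cast hlast
  have ha : a = a' := by
    have := congr_arg (· / d) hk
    simpa [Nat.mul_add_div (by omega : 0 < d), Nat.div_eq_of_lt hp.2, Nat.div_eq_of_lt hp'.2]
      using this
  subst ha
  rw [Nat.add_left_cancel hk]

theorem height_parPoint (hd : 1 ≤ d) (p : ℕ × ℕ) :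
    height (parPoint d p) = p.2 + if p.2 < p.1 then 1 else 0 := by
  rw [height, sum_parPoint hd, ← Nat.floor_natCast (R := ℝ) (p.2 + if p.2 < p.1 then 1 else 0)]
  push_cast
  rfl

theorem card_filter_range_succ_add_ite_lt_eq {b : ℕ} (hb : b < d) (j : ℕ) :
    #{a ∈ range (d + 1) | b + (if b < a then 1 else 0) = j} =
      (if b = j then b + 1 else 0) + (if b + 1 = j then d - b else 0) := by
  split_ifs with h₁ h₂ h₂
  · omega
  · rw [add_zero, ← card_range (b + 1)]
    congr 1
    ext a
    simp only [mem_filter, mem_range]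
    split_ifs <;> omega
  · rw [zero_add, ← Nat.card_Ioc b d]
    congr 1
    ext a
    simp only [mem_filter, mem_range, mem_Ioc]
    split_ifs <;> omega
  · rw [card_eq_zero, filter_eq_empty_iff]
    intro a _
    split_ifs <;> omega

theorem card_filter_add_ite_lt_eq (hd : 1 ≤ d) {j : ℕ} (hj : j ≤ d) :
    #{p ∈ range (d + 1) ×ˢ range d | p.2 + (if p.2 < p.1 then 1 else 0) = j} =
      if j = 0 ∨ j = d then 1 else d + 2 := by
  rw [card_filter, sum_product_right]
  simp_rw [← card_filter]
  rw [sum_congr rfl fun b hb => card_filter_range_succ_add_ite_lt_eq (mem_range.1 hb) j,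
    sum_add_distrib, sum_ite_eq']
  rcases j with _ | i
  · simp only [mem_range, zero_add, Nat.add_eq_zero_iff, one_ne_zero, and_false, ↓reduceIte,
      sum_const_zero, add_zero, true_or, ite_eq_left_iff, not_lt, nonpos_iff_eq_zero, zero_ne_one,
      imp_false]
    omega
  · simp only [Nat.add_right_cancel_iff, sum_ite_eq', mem_range, Nat.add_one_ne_zero, false_or]
    split_ifs <;> omega

theorem card_filter_height_fundPar_dVert (hd : 1 ≤ d) (hP : (fundPar (dVert d)).Finite)
    {k : ℕ} (hk : k ≤ d) :
    #{f ∈ hP.toFinset | height f = k} = if k = 0 ∨ k = d then 1 else d + 2 := by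
  have hP' : hP.toFinset = (range (d + 1) ×ˢ range d).image (parPoint d) :=
    coe_inj.1 (by rw [Set.Finite.coe_toFinset, fundPar_dVert hd])
  rw [hP', filter_image,
    card_image_of_injOn ((injOn_parPoint hd).mono (coe_subset.2 (filter_subset _ _)))]
  simp only [height_parPoint hd]
  exact card_filter_add_ite_lt_eq hd hk

end DSimplex

end

/-- For `d ≥ 3`, the h*-vector of the simplex with vertices
`e_1, ..., e_d, (-d, -d-1, ..., -d-1)` equals `(1, d+2, d+2, ..., d+2, 1)`. -/
theorem stmt_14 (d : ℕ) (hd : 3 ≤ d) (hs : Polynomial ℚ)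
    (hrel : (hs : PowerSeries ℚ) =
      ehr (convexHull ℝ (Set.range (dVert d))) * (1 - PowerSeries.X) ^ (d + 1)) :
    ∀ k ≤ d, hs.coeff k = if k = 0 ∨ k = d then 1 else (d : ℚ) + 2 := by
  intro k hk
  have hd₁ : 1 ≤ d := by omega
  have hP : (fundPar (dVert d)).Finite := fundPar_dVert hd₁ ▸ finite_toSet _
  have hhs : hs = hStarPoly hP := eq_hStarPoly_of_coe_eq_ehr_mul (affineIndependent_dVert hd₁)
    isInt_dVert hP (by rwa [Fintype.card_fin])
  rw [hhs, coeff_hStarPoly, card_filter_height_fundPar_dVert hd₁ hP hk]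
  push_cast
  rfl
end
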